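/- If G is dicotic and H ≥ H' in the normal-play partial order of games, then G → H ≥ G → H'. -/

import Mathlib

namespace SetTheory

universe u

/-- Re-creation of the former Mathlib `SetTheory.PGame` (removed from Mathlib). -/
inductive PGame : Type (u + 1)
  | mk : ∀ α β : Type u, (α → PGame) → (β → PGame) → PGame

namespace PGame

def LeftMoves : PGame → Type u
  | mk l _ _ _ => l

def RightMoves : PGame → Type u
  | mk _ r _ _ => r

def moveLeft : ∀ g : PGame, LeftMoves g → PGame
  | mk _ _ L _ => L

def moveRight : ∀ g : PGame, RightMoves g → PGame
  | mk _ _ _ R => R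

instance : Zero PGame := ⟨⟨PEmpty, PEmpty, PEmpty.elim, PEmpty.elim⟩⟩

def star : PGame.{u} := ⟨PUnit, PUnit, fun _ => 0, fun _ => 0⟩

/-- Inner recursion (on `y`) for `leLf`, given the values for the options of `x`. -/
def leLfAux {xl xr : Type u} (xL : xl → PGame.{u}) (xR : xr → PGame.{u})
    (fL : xl → PGame.{u} → Prop × Prop) (fR : xr → PGame.{u} → Prop × Prop) :
    PGame.{u} → Prop × Prop
  | mk yl yr yL yR =>
    ((∀ i, (fL i (mk yl yr yL yR)).2) ∧ ∀ j, (leLfAux xL xR fL fR (yR j)).2,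
     (∃ i, (leLfAux xL xR fL fR (yL i)).1) ∨ ∃ j, (fR j (mk yl yr yL yR)).1)

/-- Simultaneous definition of `(x ≤ y, x ⧏ y)` by recursion on `x`, then on `y`. -/
def leLf : PGame.{u} → PGame.{u} → Prop × Prop
  | mk _ _ xL xR => leLfAux xL xR (fun i => leLf (xL i)) (fun j => leLf (xR j))

instance : LE PGame := ⟨fun x y => (leLf x y).1⟩

def neg : PGame → PGame
  | ⟨l, r, L, R⟩ => ⟨r, l, fun i => neg (R i), fun i => neg (L i)⟩

instance : Neg PGame := ⟨neg⟩

/-- Inner recursion (on `y`) for `add`, given the values for the options of `x`. -/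
def addAux {xl xr : Type u} (fL : xl → PGame.{u} → PGame.{u}) (fR : xr → PGame.{u} → PGame.{u}) :
    PGame.{u} → PGame.{u}
  | mk yl yr yL yR =>
    mk (xl ⊕ yl) (xr ⊕ yr) (Sum.elim (fun i => fL i (mk yl yr yL yR)) (fun i => addAux fL fR (yL i)))
      (Sum.elim (fun i => fR i (mk yl yr yL yR)) (fun i => addAux fL fR (yR i)))

def add : PGame.{u} → PGame.{u} → PGame.{u}
  | mk _ _ xL xR => addAux (fun i => add (xL i)) (fun j => add (xR j))

instance : Add PGame.{u} := ⟨add⟩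

instance : Sub PGame.{u} := ⟨fun x y => x + -y⟩

class inductive Short : PGame.{u} → Type (u + 1)
  | mk : ∀ {α β : Type u} {L : α → PGame.{u}} {R : β → PGame.{u}} (_ : ∀ i : α, Short (L i))
      (_ : ∀ j : β, Short (R j)) [Fintype α] [Fintype β] [DecidableEq α] [DecidableEq β],
      Short ⟨α, β, L, R⟩

end PGame

end SetTheory

open SetTheory

open scoped PGame

namespace SeqCompound

open Classical in
/-- The sequential compound `G → H` of two pregames. -/
noncomputable def seqc : PGame → PGame → PGame
  | PGame.mk α β L R, H =>
    if Nonempty α then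
      if Nonempty β then
        PGame.mk α β (fun a => seqc (L a) H) (fun b => seqc (R b) H)
      else
        PGame.mk α H.RightMoves (fun a => seqc (L a) H) H.moveRight
    else
      if Nonempty β then
        PGame.mk H.LeftMoves β H.moveLeft (fun b => seqc (R b) H)
      else H

/-- A pregame is dicotic (all-small) if in every subposition,
Left has an option iff Right has an option. -/
def Dicotic : PGame → Prop
  | PGame.mk α β L R =>
    (Nonempty α ↔ Nonempty β) ∧ (∀ a, Dicotic (L a)) ∧ (∀ b, Dicotic (R b))

/-- The canonical nonnegative integer game `{n-1 | }`. -/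
def intGame : ℕ → PGame
  | 0 => 0
  | n + 1 => PGame.mk PUnit PEmpty (fun _ => intGame n) PEmpty.elim

/-- `upSum k` is the disjunctive sum `↑¹ + ↑² + ⋯ + ↑ᵏ`. -/
def upSum : ℕ → PGame
  | 0 => 0
  | k + 1 => upSum k +
      PGame.mk PUnit PUnit (fun _ => 0) (fun _ => PGame.star - upSum k)

/-- `upPow k` is the game `↑^(k+1) = {0 | ∗ - (↑¹ + ⋯ + ↑ᵏ)}`. -/
def upPow (k : ℕ) : PGame :=
  PGame.mk PUnit PUnit (fun _ => 0) (fun _ => PGame.star - upSum k)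

/-- Sequential compound of a list of games. -/
noncomputable def seqList : List PGame → PGame
  | [] => 0
  | G :: l => seqc G (seqList l)

end SeqCompound

/-! By induction on `G`. A dicotic `G` either has options on both sides, and then `G → H` and
`G → H'` are built from the same move types with options `Gᴸ → H` and `Gᴸ → H'` (resp. `Gᴿ`),
so the inequality holds option by option; or `G` has no options at all, and then `G → H = H`. -/

namespace SetTheory.PGame

def LF (x y : PGame.{u}) : Prop := (leLf x y).2

infix:50 " ⧏ " => LF

theorem mk_le_mk {xl xr : Type u} {xL : xl → PGame.{u}} {xR : xr → PGame.{u}}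
    {yl yr : Type u} {yL : yl → PGame.{u}} {yR : yr → PGame.{u}} :
    mk xl xr xL xR ≤ mk yl yr yL yR ↔
      (∀ i, xL i ⧏ mk yl yr yL yR) ∧ ∀ j, mk xl xr xL xR ⧏ yR j :=
  Iff.rfl

theorem lf_mk_of_le_moveLeft {x : PGame.{u}} {yl yr : Type u} {yL : yl → PGame.{u}}
    {yR : yr → PGame.{u}} (i : yl) (h : x ≤ yL i) : x ⧏ mk yl yr yL yR := by
  cases x
  exact Or.inl ⟨i, h⟩

theorem mk_lf_of_moveRight_le {xl xr : Type u} {xL : xl → PGame.{u}} {xR : xr → PGame.{u}}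
    {y : PGame.{u}} (j : xr) (h : xR j ≤ y) : mk xl xr xL xR ⧏ y := by
  cases y
  exact Or.inr ⟨j, h⟩

theorem mk_le_mk_of_le {l r : Type u} {xL yL : l → PGame.{u}} {xR yR : r → PGame.{u}}
    (hL : ∀ i, xL i ≤ yL i) (hR : ∀ j, xR j ≤ yR j) : mk l r xL xR ≤ mk l r yL yR :=
  mk_le_mk.2 ⟨fun i => lf_mk_of_le_moveLeft i (hL i), fun j => mk_lf_of_moveRight_le j (hR j)⟩

end SetTheory.PGame

namespace SeqCompound

open PGame

theorem seqc_mk_of_nonempty {α β : Type u} (L : α → PGame.{u}) (R : β → PGame.{u})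
    (H : PGame.{u}) [hα : Nonempty α] [hβ : Nonempty β] :
    seqc (mk α β L R) H = mk α β (fun a => seqc (L a) H) (fun b => seqc (R b) H) := by
  rw [seqc]
  simp only [if_pos hα, if_pos hβ]

theorem seqc_mk_of_isEmpty {α β : Type u} (L : α → PGame.{u}) (R : β → PGame.{u})
    (H : PGame.{u}) [IsEmpty α] [IsEmpty β] : seqc (mk α β L R) H = H := by
  rw [seqc]
  simp only [not_nonempty_iff.2 ‹IsEmpty α›, not_nonempty_iff.2 ‹IsEmpty β›, if_false]

theorem Dicotic.seqc_le_seqc {G : PGame.{u}} (hG : Dicotic G) {H H' : PGame.{u}} (h : H' ≤ H) :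
    seqc G H' ≤ seqc G H := by
  induction G with
  | mk α β L R ihL ihR =>
    obtain ⟨hiff, hL, hR⟩ := hG
    rcases isEmpty_or_nonempty α with hα | hα
    · have : IsEmpty β := not_nonempty_iff.1 (hiff.not.1 (not_nonempty_iff.2 hα))
      rwa [seqc_mk_of_isEmpty, seqc_mk_of_isEmpty]
    · have : Nonempty β := hiff.1 hα
      rw [seqc_mk_of_nonempty, seqc_mk_of_nonempty]
      exact mk_le_mk_of_le (fun a => ihL a (hL a)) (fun b => ihR b (hR b))

end SeqCompound

open SeqCompound in
theorem seqc_le_of_le_general (G H H' : PGame)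
    (hG : Dicotic G) (h : H' ≤ H) :
    seqc G H' ≤ seqc G H :=
  hG.seqc_le_seqc h

open SeqCompound in
/-- if `G` is dicotic and `H ≥ H'`, then `G → H ≥ G → H'`. -/
theorem seqc_le_of_le (G H H' : PGame) [PGame.Short G] [PGame.Short H] [PGame.Short H']
    (hG : Dicotic G) (h : H' ≤ H) :
    seqc G H' ≤ seqc G H :=
  seqc_le_of_le_general G H H' hG h
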